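/- arXiv:2006.08926 — 3 statements merged into one kernel-verified Lean document; each statement's English description precedes it below -/
import Mathlib

section
/- With f = (x − α_i)^{e_i} f_i over ℤ_p where f_i(α_i) ≠ 0, and Δ = v_p(D(rad(f))): for any ᾱ ∈ ℤ_p with v_p(ᾱ − α_i) > Δ, one has v_p(f_i(ᾱ)) = v_p(f_i(α_i)). In particular the valuation of the α_i-free part of f is constant on the Δ-neighborhood of α_i. -/
open Polynomial


section GaussLemmas
variable {K : Type*} [Field K] {Γ : Type*} [LinearOrderedCommGroupWithZero Γ]
  (v : Valuation K Γ)

/-- Peeling one root off a polynomial: coefficientwise valuation bound. -/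
lemma gauss_peel (P : K[X]) (r : K) (δ : Γ)
    (hle : ∀ j, v ((P * (X - Polynomial.C r)).coeff j) ≤ δ) :
    ∀ j, v (P.coeff j) * max (v r) 1 ≤ δ := by
  have hcoeff : ∀ j : ℕ, (P * (X - Polynomial.C r)).coeff (j + 1)
      = P.coeff j - P.coeff (j + 1) * r := by
    intro j
    rw [mul_sub, coeff_sub, coeff_mul_X, coeff_mul_C]
  have hcoeff0 : (P * (X - Polynomial.C r)).coeff 0 = P.coeff 0 * (-r) := by
    rw [mul_sub, coeff_sub, mul_coeff_zero, coeff_X_zero, mul_zero, coeff_mul_C, zero_sub,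
      mul_neg]
  rcases le_or_gt (v r) 1 with hr | hr
  · have key : ∀ t j, P.natDegree + 1 ≤ j + t → v (P.coeff j) ≤ δ := by
      intro t
      induction t with
      | zero =>
        intro j hj
        rw [P.coeff_eq_zero_of_natDegree_lt (by omega), map_zero]
        exact zero_le'
      | succ t ih =>
        intro j hj
        by_cases hdeg : P.natDegree < j
        · rw [P.coeff_eq_zero_of_natDegree_lt hdeg, map_zero]; exact zero_le'
        · have heq : P.coeff j = (P * (X - Polynomial.C r)).coeff (j + 1)
              + P.coeff (j + 1) * r := by rw [hcoeff]; ring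
          calc v (P.coeff j) ≤ max (v ((P * (X - Polynomial.C r)).coeff (j + 1)))
                (v (P.coeff (j + 1) * r)) := heq ▸ v.map_add _ _
            _ ≤ δ := by
                apply max_le (hle _)
                rw [v.map_mul]
                calc v (P.coeff (j+1)) * v r ≤ δ * 1 :=
                      mul_le_mul' (ih (j+1) (by omega)) hr
                  _ = δ := mul_one δ
    intro j
    rw [max_eq_right hr, mul_one]
    exact key (P.natDegree + 1) j (by omega)
  · have key : ∀ j, v (P.coeff j) * v r ≤ δ := by
      intro j
      induction j using Nat.strong_induction_on with
      | _ j ih =>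
        match j with
        | 0 =>
          have := hle 0
          rw [hcoeff0, v.map_mul, v.map_neg] at this
          exact this
        | (j+1) =>
          have heq : P.coeff (j+1) * r = P.coeff j - (P * (X - Polynomial.C r)).coeff (j + 1) := by
            rw [hcoeff]; ring
          calc v (P.coeff (j+1)) * v r = v (P.coeff (j+1) * r) := (v.map_mul _ _).symm
            _ ≤ max (v (P.coeff j)) (v ((P * (X - Polynomial.C r)).coeff (j + 1))) :=
                heq ▸ v.map_sub _ _
            _ ≤ δ := by
                apply max_le _ (hle _)
                calc v (P.coeff j) ≤ v (P.coeff j) * v r := le_mul_of_one_le_right' hr.le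
                  _ ≤ δ := ih j (by omega)
    intro j
    rw [max_eq_left hr.le]
    exact key j

/-- Nonarchimedean Mahler-measure bound. -/
lemma gauss_mahler (s : Multiset K) : ∀ (lc : K) (δ : Γ),
    (∀ j, v ((Polynomial.C lc * (s.map fun r => X - Polynomial.C r).prod).coeff j) ≤ δ) →
    v lc * (s.map fun r => max (v r) 1).prod ≤ δ := by
  induction s using Multiset.induction with
  | empty =>
    intro lc δ hle
    have := hle 0
    simpa using this
  | cons r s ih =>
    intro lc δ hle
    have hMr : (0:Γ) < max (v r) 1 := lt_of_lt_of_le zero_lt_one (le_max_right _ _)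
    have hA : ∀ j, v ((Polynomial.C lc * (s.map fun r => X - Polynomial.C r).prod).coeff j)
        * max (v r) 1 ≤ δ := by
      apply gauss_peel
      intro j
      have : Polynomial.C lc * (s.map fun r => X - Polynomial.C r).prod * (X - Polynomial.C r)
          = Polynomial.C lc * ((r ::ₘ s).map fun r => X - Polynomial.C r).prod := by
        rw [Multiset.map_cons, Multiset.prod_cons]; ring
      rw [this]; exact hle j
    have hA' : ∀ j, v ((Polynomial.C lc * (s.map fun r => X - Polynomial.C r).prod).coeff j)
        ≤ δ / max (v r) 1 := fun j => (le_div_iff₀ hMr).2 (hA j)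
    have := ih lc (δ / max (v r) 1) hA'
    rw [Multiset.map_cons, Multiset.prod_cons]
    calc v lc * (max (v r) 1 * (s.map fun r => max (v r) 1).prod)
        = (v lc * (s.map fun r => max (v r) 1).prod) * max (v r) 1 := by
          rw [mul_comm (max (v r) 1), ← mul_assoc]
      _ ≤ δ := (le_div_iff₀ hMr).1 this

end GaussLemmas


lemma prod_list_getD {α β : Type*} [CommMonoid β] (l : List α) (d : α) (f : α → β) :
    (l.map f).prod = ∏ a ∈ Finset.range l.length, f (l.getD a d) := by
  induction l with
  | nil => simp
  | cons x xs ih =>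
    rw [List.map_cons, List.prod_cons, List.length_cons, Finset.prod_range_succ']
    simp only [List.getD_cons_succ, List.getD_cons_zero]
    rw [← ih, mul_comm]

lemma prod_multiset_map {α β : Type*} [CommMonoid β] (s : Multiset α) (d : α) (f : α → β) :
    (s.map f).prod = ∏ a ∈ Finset.range s.toList.length, f (s.toList.getD a d) := by
  rw [← prod_list_getD s.toList d f]
  conv_lhs => rw [← Multiset.coe_toList s]
  rw [← Multiset.prod_coe (s.toList.map f), Multiset.map_coe]

variable {p : ℕ} [Fact p.Prime]

lemma padic_norm_prod {ι : Type*} (s : Finset ι) (f : ι → ℤ_[p]) :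
    ‖∏ j ∈ s, f j‖ = ∏ j ∈ s, ‖f j‖ := by
  classical
  induction s using Finset.induction with
  | empty => simp
  | insert _ _ hx ih => rename_i a s'
                        rw [Finset.prod_insert hx, Finset.prod_insert hx, norm_mul, ih]

lemma padic_norm_add_eq {x y : ℤ_[p]} (h : ‖x‖ < ‖y‖) : ‖x + y‖ = ‖y‖ := by
  apply le_antisymm
  · exact (PadicInt.nonarchimedean x y).trans (by rw [max_eq_right h.le])
  · by_contra hlt
    push_neg at hlt
    have : ‖y‖ ≤ max ‖x + y‖ ‖x‖ := by
      calc ‖y‖ = ‖x + y + (-x)‖ := by ring_nf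
        _ ≤ max ‖x + y‖ ‖-x‖ := PadicInt.nonarchimedean _ _
        _ = max ‖x + y‖ ‖x‖ := by rw [norm_neg]
    rcases max_cases ‖x + y‖ ‖x‖ with ⟨heq, _⟩ | ⟨heq, _⟩ <;> rw [heq] at this <;> linarith

lemma padic_norm_dvd_le {x y : ℤ_[p]} (h : x ∣ y) : ‖y‖ ≤ ‖x‖ := by
  obtain ⟨c, rfl⟩ := h
  rw [norm_mul]
  exact mul_le_of_le_one_right (norm_nonneg x) (PadicInt.norm_le_one c)


noncomputable def padicEmb (p : ℕ) [Fact p.Prime] : ℤ_[p] →+* AlgebraicClosure ℚ_[p] :=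
  (algebraMap ℚ_[p] (AlgebraicClosure ℚ_[p])).comp (PadicInt.Coe.ringHom)

noncomputable def padicDisc (p : ℕ) [Fact p.Prime] (h : Polynomial ℤ_[p]) :
    AlgebraicClosure ℚ_[p] :=
  let l := (h.map (padicEmb p)).roots.toList
  (padicEmb p h.leadingCoeff) ^ (2 * h.natDegree - 1) *
    ∏ ij ∈ (Finset.range l.length ×ˢ Finset.range l.length).filter (fun ij => ij.1 < ij.2),
      (l.getD ij.1 0 - l.getD ij.2 0) ^ 2

set_option maxHeartbeats 2000000 in
lemma padicDisc_def (p : ℕ) [Fact p.Prime] (h : Polynomial ℤ_[p]) :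
    padicDisc p h = (padicEmb p h.leadingCoeff) ^ (2 * h.natDegree - 1) *
    ∏ ij ∈ (Finset.range (h.map (padicEmb p)).roots.toList.length
        ×ˢ Finset.range (h.map (padicEmb p)).roots.toList.length).filter
        (fun ij => ij.1 < ij.2),
      ((h.map (padicEmb p)).roots.toList.getD ij.1 0
        - (h.map (padicEmb p)).roots.toList.getD ij.2 0) ^ 2 := rfl

/-- Unique valuation for the `α_i`-free part `f_i = f/(x - α_i)^{e_i}`: if
`v_p(ᾱ - α i) > Δ` then `v_p(f_i(ᾱ)) = v_p(f_i(α i))`. -/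
theorem stmt7 (p : ℕ) [Fact p.Prime] (f : Polynomial ℤ_[p]) (d : ℕ) (hd : d = f.natDegree)
    (n m : ℕ) (α : Fin n → ℤ_[p]) (e : Fin n → ℕ) (he : ∀ i, 1 ≤ e i)
    (hα : Function.Injective α)
    (g : Fin m → Polynomial ℤ_[p]) (t : Fin m → ℕ) (ht : ∀ j, 1 ≤ t j)
    (hg_irr : ∀ j, Irreducible (g j))
    (hg_noroot : ∀ j (x : ℤ_[p]), (g j).eval x ≠ 0)
    (hg_coprime : ∀ j jQ, j ≠ jQ → ¬ Associated (g j) (g jQ))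
    (hfact : f = (∏ i, (X - C (α i)) ^ e i) * ∏ j, g j ^ t j)
    (D : ℤ_[p]) (hD : padicEmb p D = padicDisc p ((∏ i, (X - C (α i))) * ∏ j, g j))
    (hD0 : D ≠ 0) (Δ : ℕ) (hΔ : (Δ : ℤ) = D.valuation)
    (i : Fin n) (fi : Polynomial ℤ_[p])
    (hfi : f = (X - C (α i)) ^ e i * fi) (hfi0 : fi.eval (α i) ≠ 0)
    (ᾱ : ℤ_[p]) (hclose : ‖ᾱ - α i‖ < (p : ℝ) ^ (-(Δ : ℤ))) :
    ‖fi.eval ᾱ‖ = ‖fi.eval (α i)‖ := by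
  classical
  set w : Polynomial ℤ_[p] := (∏ j ∈ Finset.univ.erase i, (X - C (α j))) * ∏ j, g j with hw_def
  set w0 : ℤ_[p] := w.eval (α i) with hw0_def
  have hw0eval : w0 = (∏ j ∈ Finset.univ.erase i, (α i - α j)) * ∏ j, (g j).eval (α i) := by
    rw [hw0_def, hw_def]
    simp [eval_prod]
  have hw0ne : w0 ≠ 0 := by
    rw [hw0eval]
    apply mul_ne_zero
    · exact Finset.prod_ne_zero_iff.2 fun j hj =>
        sub_ne_zero_of_ne fun hc => (Finset.mem_erase.1 hj).1 (hα hc.symm)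
    · exact Finset.prod_ne_zero_iff.2 fun j _ => hg_noroot j (α i)
  -- MAIN inequality
  have MAIN : ‖D‖ ≤ ‖w0‖ := by
    have hg0 : ∀ j, g j ≠ 0 := fun j => (hg_irr j).ne_zero
    have hdisc0 := hD.trans (padicDisc_def p _)
    set em := padicEmb p with hem
    have hinj : Function.Injective em := by
      have h1 : Function.Injective (algebraMap ℚ_[p] (AlgebraicClosure ℚ_[p])) :=
        (algebraMap ℚ_[p] (AlgebraicClosure ℚ_[p])).injective
      have h2 : Function.Injective (PadicInt.Coe.ringHom (p := p)) := Subtype.coe_injective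
      exact h1.comp h2
    set hrad : Polynomial ℤ_[p] := (∏ i', (X - C (α i'))) * ∏ j, g j with hrad_def
    have hhw : hrad = (X - C (α i)) * w := by
      rw [hrad_def, hw_def,
        ← Finset.mul_prod_erase Finset.univ (fun j => (X - C (α j))) (Finset.mem_univ i)]
      ring
    have hh0 : hrad ≠ 0 := by
      rw [hrad_def]
      exact mul_ne_zero (Finset.prod_ne_zero_iff.2 fun _ _ => X_sub_C_ne_zero _)
        (Finset.prod_ne_zero_iff.2 fun j _ => hg0 j)
    set H := hrad.map em with hH_def
    have hH0 : H ≠ 0 := (Polynomial.map_ne_zero_iff hinj).2 hh0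
    set s := H.roots with hs_def
    set l := s.toList with hl_def
    set L := l.length with hLdef
    have hLdeg : hrad.natDegree = L := by
      rw [← Polynomial.natDegree_map_eq_of_injective hinj hrad, ← hH_def,
        ← Polynomial.splits_iff_card_roots.1 (IsAlgClosed.splits H),
        hLdef, hl_def, Multiset.length_toList, hs_def]
    have hradroot : hrad.eval (α i) = 0 := by
      rw [hhw, eval_mul, eval_sub, eval_X, eval_C, sub_self, zero_mul]
    have hrooti : em (α i) ∈ l := by
      rw [hl_def]
      apply Multiset.mem_toList.2
      rw [hs_def, Polynomial.mem_roots']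
      refine ⟨hH0, ?_⟩
      show H.eval (em (α i)) = 0
      rw [hH_def, Polynomial.eval_map, Polynomial.eval₂_at_apply, hradroot, map_zero]
    obtain ⟨k, hkL, hk⟩ := List.mem_iff_getElem.1 hrooti
    have hlgk : l.getD k 0 = em (α i) := by
      rw [List.getD_eq_getElem l 0 hkL]; exact hk
    have hkL' : k < L := hkL
    obtain ⟨A, hmemA, hlocal⟩ := IsLocalRing.exists_factor_valuationRing em
    set v := A.valuation with hv_def
    have hvle : ∀ x : ℤ_[p], v (em x) ≤ 1 := fun x => (A.valuation_le_one_iff _).2 (hmemA x)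
    -- step 1: rationality
    have step1 : ∀ u : ℚ_[p], v (algebraMap ℚ_[p] (AlgebraicClosure ℚ_[p]) u) ≤ 1 → ‖u‖ ≤ 1 := by
      intro u hu
      by_contra hgt
      push_neg at hgt
      have hu0 : u ≠ 0 := by
        intro h0
        rw [h0, norm_zero] at hgt
        linarith
      have hinv1 : ‖u⁻¹‖ < 1 := by rw [norm_inv]; exact inv_lt_one_of_one_lt₀ hgt
      set z : ℤ_[p] := ⟨u⁻¹, hinv1.le⟩ with hz
      have hzcoe : (z : ℚ_[p]) = u⁻¹ := rfl
      have hznu : ¬ IsUnit z := by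
        rw [PadicInt.isUnit_iff]
        intro h1
        rw [PadicInt.norm_def, hzcoe] at h1
        exact absurd h1 (ne_of_lt hinv1)
      apply hznu
      apply hlocal.map_nonunit
      rw [isUnit_iff_exists_inv]
      refine ⟨⟨algebraMap ℚ_[p] (AlgebraicClosure ℚ_[p]) u, (A.valuation_le_one_iff _).1 hu⟩, ?_⟩
      refine Subtype.ext ?_
      show em z * algebraMap ℚ_[p] (AlgebraicClosure ℚ_[p]) u = 1
      have he1 : em z = algebraMap ℚ_[p] (AlgebraicClosure ℚ_[p]) u⁻¹ := by
        show algebraMap ℚ_[p] (AlgebraicClosure ℚ_[p]) (z : ℚ_[p]) = _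
        rw [hzcoe]
      rw [he1, ← map_mul, inv_mul_cancel₀ hu0, map_one]
    -- polynomial identities
    have hlcne : em hrad.leadingCoeff ≠ 0 :=
      (map_ne_zero_iff em hinj).2 (leadingCoeff_ne_zero.2 hh0)
    have hsplitid : H = Polynomial.C (em hrad.leadingCoeff)
        * (s.map fun a => X - Polynomial.C a).prod := by
      have h1 := (IsAlgClosed.splits H).eq_prod_roots
      rw [Polynomial.leadingCoeff_map_of_leadingCoeff_ne_zero em hlcne] at h1
      rw [← hs_def] at h1
      exact h1
    have hHlist : H = Polynomial.C (em hrad.leadingCoeff)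
        * ∏ a ∈ Finset.range L, (X - Polynomial.C (l.getD a 0)) := by
      rw [hsplitid]
      congr 1
      have := prod_multiset_map s 0 (fun a => (X : Polynomial (AlgebraicClosure ℚ_[p]))
        - Polynomial.C a)
      rw [← hl_def, ← hLdef] at this
      exact this
    have hHW : H = (X - Polynomial.C (em (α i))) * (w.map em) := by
      rw [hH_def, hhw, Polynomial.map_mul, Polynomial.map_sub, Polynomial.map_X, Polynomial.map_C]
    have hWform : w.map em = Polynomial.C (em hrad.leadingCoeff)
        * ∏ a ∈ (Finset.range L).erase k, (X - Polynomial.C (l.getD a 0)) := by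
      apply mul_left_cancel₀ (X_sub_C_ne_zero (em (α i)))
      rw [← hHW, hHlist,
        ← Finset.mul_prod_erase (Finset.range L) _ (Finset.mem_range.2 hkL'), hlgk]
      ring
    have hW0 : em w0 = em hrad.leadingCoeff
        * ∏ a ∈ (Finset.range L).erase k, (em (α i) - l.getD a 0) := by
      have h1 : (w.map em).eval (em (α i)) = em w0 := by
        rw [Polynomial.eval_map, Polynomial.eval₂_at_apply, hw0_def]
      rw [← h1, hWform, eval_mul, eval_C, eval_prod]
      simp only [eval_sub, eval_X, eval_C]
    -- notation
    set S := (Finset.range L).erase k with hS_def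
    set Tall := (Finset.range L ×ˢ Finset.range L).filter (fun ij : ℕ × ℕ => ij.1 < ij.2)
      with hTall
    set F : ℕ × ℕ → A.ValueGroup := fun q => (v (l.getD q.1 0 - l.getD q.2 0)) ^ 2 with hF
    set VL := v (em hrad.leadingCoeff) with hVL
    set Mf : ℕ → A.ValueGroup := fun a => max (v (l.getD a 0)) 1 with hMf
    set Q := ∏ b ∈ S, v (em (α i) - l.getD b 0) with hQ_def
    have hvD : v (em D) = VL ^ (2 * L - 1) * ∏ q ∈ Tall, F q := by
      rw [hdisc0, v.map_mul, v.map_pow, map_prod v, hLdeg]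
      congr 1
      exact Finset.prod_congr rfl fun q _ => (v.map_pow _ 2)
    have hvW0 : v (em w0) = VL * Q := by
      rw [hW0, v.map_mul, map_prod v]
    -- split pairs through k
    have hsplitT : ∏ q ∈ Tall, F q =
        (∏ q ∈ Tall.filter (fun q => q.1 = k ∨ q.2 = k), F q) *
        ∏ q ∈ Tall.filter (fun q => ¬(q.1 = k ∨ q.2 = k)), F q :=
      (Finset.prod_filter_mul_prod_filter_not Tall _ F).symm
    set T' := Tall.filter (fun q => ¬(q.1 = k ∨ q.2 = k)) with hT'
    have hTk : ∏ q ∈ Tall.filter (fun q => q.1 = k ∨ q.2 = k), F q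
        = ∏ b ∈ S, (v (em (α i) - l.getD b 0)) ^ 2 := by
      apply Finset.prod_nbij' (i := fun q : ℕ × ℕ => if q.1 = k then q.2 else q.1)
        (j := fun b => if k < b then (k, b) else (b, k))
      · intro q hq
        simp only [hTall, Finset.mem_filter, Finset.mem_product, Finset.mem_range] at hq
        simp only [hS_def, Finset.mem_erase, Finset.mem_range]
        by_cases h1 : q.1 = k
        · rw [if_pos h1]; omega
        · rw [if_neg h1]; omega
      · intro b hb
        simp only [hS_def, Finset.mem_erase, Finset.mem_range] at hb
        simp only [hTall, Finset.mem_filter, Finset.mem_product, Finset.mem_range]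
        by_cases h1 : k < b
        · rw [if_pos h1]; dsimp only; omega
        · rw [if_neg h1]; dsimp only; omega
      · intro q hq
        simp only [hTall, Finset.mem_filter, Finset.mem_product, Finset.mem_range] at hq
        by_cases h1 : q.1 = k
        · rw [if_pos h1, if_pos (by omega)]
          exact Prod.ext h1.symm rfl
        · rw [if_neg h1, if_neg (by omega)]
          refine Prod.ext rfl ?_
          show k = q.2
          omega
      · intro b hb
        simp only [hS_def, Finset.mem_erase, Finset.mem_range] at hb
        by_cases h1 : k < b
        · rw [if_pos h1]
          simp
        · rw [if_neg h1]
          simp only [if_neg (show ¬ b = k by omega)]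
      · intro q hq
        simp only [hTall, Finset.mem_filter, Finset.mem_product, Finset.mem_range] at hq
        by_cases h1 : q.1 = k
        · rw [hF, if_pos h1]
          simp only
          rw [h1, hlgk]
        · have h2 : q.2 = k := by omega
          rw [hF, if_neg h1]
          simp only
          rw [h2, hlgk, show (v (l.getD q.1 0 - em (α i))) = v (em (α i) - l.getD q.1 0) by
            rw [← Valuation.map_neg v, neg_sub]]
    -- Mahler bound
    have hMahler : VL * ∏ a ∈ Finset.range L, Mf a ≤ 1 := by
      have h1 : ∀ j, v ((Polynomial.C (em hrad.leadingCoeff)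
          * (s.map fun r => X - Polynomial.C r).prod).coeff j) ≤ 1 := by
        intro j
        rw [← hsplitid, hH_def, Polynomial.coeff_map]
        exact hvle _
      have h2 := gauss_mahler v s (em hrad.leadingCoeff) 1 h1
      have h3 := prod_multiset_map s 0 (fun r => max (v r) 1)
      rw [← hl_def, ← hLdef] at h3
      rw [h3] at h2
      exact h2
    have hMk1 : (1 : A.ValueGroup) ≤ Mf k := le_max_right _ _
    have hMahlerS : VL * ∏ a ∈ S, Mf a ≤ 1 := by
      refine le_trans ?_ hMahler
      rw [← Finset.mul_prod_erase (Finset.range L) Mf (Finset.mem_range.2 hkL'), ← hS_def]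
      calc VL * ∏ a ∈ S, Mf a ≤ (VL * ∏ a ∈ S, Mf a) * Mf k :=
            le_mul_of_one_le_right' hMk1
        _ = VL * (Mf k * ∏ a ∈ S, Mf a) := by ac_rfl
    have hVL1 : VL ≤ 1 := hvle _
    -- pointwise bounds
    have hQle : Q ≤ ∏ b ∈ S, Mf b := by
      rw [hQ_def]
      apply Finset.prod_le_prod'
      intro b _
      exact le_trans (v.map_sub _ _)
        (max_le (le_trans (hvle (α i)) (le_max_right _ _)) (le_max_left _ _))
    have hP'le : ∏ q ∈ T', F q ≤ ∏ q ∈ T', (Mf q.1 * Mf q.2) ^ 2 := by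
      apply Finset.prod_le_prod'
      intro q _
      apply pow_le_pow_left'
      refine le_trans (v.map_sub _ _) (max_le ?_ ?_)
      · exact le_trans (le_max_left _ 1) (le_mul_of_one_le_right' (le_max_right _ _))
      · exact le_trans (le_max_left _ 1) (le_mul_of_one_le_left' (le_max_right _ _))
    -- counting
    have hT'form : T' = (S ×ˢ S).filter (fun q => q.1 < q.2) := by
      ext q
      simp only [hT', hTall, hS_def, Finset.mem_filter, Finset.mem_product, Finset.mem_range,
        Finset.mem_erase]
      omega
    have hcount : ∏ q ∈ T', (Mf q.1 * Mf q.2) ^ 2 = ∏ b ∈ S, Mf b ^ (2 * (S.card - 1)) := by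
      rw [hT'form]
      have hdisj : Disjoint ((S ×ˢ S).filter (fun q => q.1 < q.2))
          ((S ×ˢ S).filter (fun q => q.2 < q.1)) := by
        rw [Finset.disjoint_left]
        intro q h1 h2
        simp only [Finset.mem_filter] at h1 h2
        omega
      have hunion : (S ×ˢ S).filter (fun q => q.1 < q.2) ∪ (S ×ˢ S).filter (fun q => q.2 < q.1)
          = (S ×ˢ S).filter (fun q => q.1 ≠ q.2) := by
        ext q
        simp only [Finset.mem_union, Finset.mem_filter]
        constructor
        · rintro (⟨h1, h2⟩ | ⟨h1, h2⟩) <;> exact ⟨h1, by omega⟩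
        · rintro ⟨h1, h2⟩
          rcases Nat.lt_or_ge q.1 q.2 with h | h
          · exact Or.inl ⟨h1, h⟩
          · exact Or.inr ⟨h1, by omega⟩
      have hswap : ∏ q ∈ (S ×ˢ S).filter (fun q => q.2 < q.1), Mf q.1
          = ∏ q ∈ (S ×ˢ S).filter (fun q => q.1 < q.2), Mf q.2 := by
        apply Finset.prod_nbij' (i := Prod.swap) (j := Prod.swap)
        · intro q hq
          simp only [Finset.mem_filter, Finset.mem_product] at *
          exact ⟨⟨hq.1.2, hq.1.1⟩, hq.2⟩
        · intro q hq
          simp only [Finset.mem_filter, Finset.mem_product] at *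
          exact ⟨⟨hq.1.2, hq.1.1⟩, hq.2⟩
        · intro q _; exact Prod.swap_swap q
        · intro q _; exact Prod.swap_swap q
        · intro q _; rfl
      have key1 : ∏ q ∈ (S ×ˢ S).filter (fun q => q.1 < q.2), (Mf q.1 * Mf q.2)
          = ∏ q ∈ (S ×ˢ S).filter (fun q => q.1 ≠ q.2), Mf q.1 := by
        rw [← hunion, Finset.prod_union hdisj, Finset.prod_mul_distrib, hswap]
      have key2 : ∏ q ∈ (S ×ˢ S).filter (fun q => q.1 ≠ q.2), Mf q.1
          = ∏ b ∈ S, Mf b ^ (S.card - 1) := by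
        rw [Finset.prod_filter, Finset.prod_product]
        apply Finset.prod_congr rfl
        intro a ha
        dsimp only
        rw [← Finset.prod_filter, Finset.filter_ne S a, Finset.prod_const,
          Finset.card_erase_of_mem ha]
      calc ∏ q ∈ (S ×ˢ S).filter (fun q => q.1 < q.2), (Mf q.1 * Mf q.2) ^ 2
          = (∏ q ∈ (S ×ˢ S).filter (fun q => q.1 < q.2), (Mf q.1 * Mf q.2)) ^ 2 :=
            Finset.prod_pow _ 2 _
        _ = (∏ b ∈ S, Mf b ^ (S.card - 1)) ^ 2 := by rw [key1, key2]
        _ = ∏ b ∈ S, (Mf b ^ (S.card - 1)) ^ 2 := (Finset.prod_pow _ 2 _).symm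
        _ = ∏ b ∈ S, Mf b ^ (2 * (S.card - 1)) :=
            Finset.prod_congr rfl fun b _ => by rw [← pow_mul, Nat.mul_comm]
    have hcard : S.card = L - 1 := by
      rw [hS_def, Finset.card_erase_of_mem (Finset.mem_range.2 hkL'), Finset.card_range]
    -- core bound
    have CORE : VL ^ (2 * L - 2) * (Q * ∏ q ∈ T', F q) ≤ 1 := by
      by_cases hLone : L = 1
      · have hSe : S = ∅ := by
          rw [hS_def]
          ext a
          simp only [Finset.mem_erase, Finset.mem_range, Finset.notMem_empty, iff_false]
          omega
        have hT'e : T' = ∅ := by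
          rw [hT'form, hSe]
          simp
        rw [hQ_def, hSe, hT'e, hLone]
        simp
      · have hL2 : 2 ≤ L := by omega
        have hb1 : Q * ∏ q ∈ T', F q ≤ ∏ b ∈ S, Mf b ^ (2 * L - 3) := by
          calc Q * ∏ q ∈ T', F q ≤ (∏ b ∈ S, Mf b) * ∏ b ∈ S, Mf b ^ (2 * (S.card - 1)) :=
                mul_le_mul' hQle (hP'le.trans_eq hcount)
            _ = ∏ b ∈ S, Mf b ^ (2 * L - 3) := by
                rw [← Finset.prod_mul_distrib]
                apply Finset.prod_congr rfl
                intro b _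
                rw [← pow_succ']
                congr 1
                omega
        calc VL ^ (2 * L - 2) * (Q * ∏ q ∈ T', F q)
            ≤ VL ^ (2 * L - 2) * ∏ b ∈ S, Mf b ^ (2 * L - 3) := mul_le_mul_right hb1 _
          _ = VL * (VL * ∏ b ∈ S, Mf b) ^ (2 * L - 3) := by
              rw [Finset.prod_pow, mul_pow]
              rw [show 2 * L - 2 = (2 * L - 3) + 1 by omega, pow_succ]
              rw [mul_comm (VL ^ (2 * L - 3)) VL, mul_assoc]
          _ ≤ VL * 1 := mul_le_mul_right (pow_le_one' hMahlerS _) VL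
          _ ≤ 1 := by rw [mul_one]; exact hVL1
    -- final valuation inequality
    have final : v (em D) ≤ v (em w0) := by
      rw [hvD, hsplitT, hTk, hvW0]
      have hL1 : 1 ≤ L := by omega
      have hrw : VL ^ (2 * L - 1) * ((∏ b ∈ S, (v (em (α i) - l.getD b 0)) ^ 2) * ∏ q ∈ T', F q)
          = (VL * Q) * (VL ^ (2 * L - 2) * (Q * ∏ q ∈ T', F q)) := by
        rw [Finset.prod_pow, ← hQ_def, show 2 * L - 1 = (2 * L - 2) + 1 by omega, pow_succ, sq]
        ac_rfl
      rw [hrw]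
      exact mul_le_of_le_one_right' CORE
    -- transfer back to ℚ_p
    have hw0Q : ((w0 : ℚ_[p])) ≠ 0 := by
      intro hc
      exact hw0ne (Subtype.ext (by simpa using hc))
    have hq1 : ‖(D : ℚ_[p]) / (w0 : ℚ_[p])‖ ≤ 1 := by
      apply step1
      rw [map_div₀]
      have heD : algebraMap ℚ_[p] (AlgebraicClosure ℚ_[p]) (D : ℚ_[p]) = em D := rfl
      have hew : algebraMap ℚ_[p] (AlgebraicClosure ℚ_[p]) (w0 : ℚ_[p]) = em w0 := rfl
      rw [heD, hew, map_div₀ v]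
      have hpos : (0 : A.ValueGroup) < v (em w0) :=
        zero_lt_iff.2 ((Valuation.ne_zero_iff v).2 ((map_ne_zero_iff em hinj).2 hw0ne))
      exact (div_le_one₀ hpos).2 final
    rw [norm_div] at hq1
    rw [div_le_one (norm_pos_iff.2 hw0Q)] at hq1
    rw [PadicInt.norm_def, PadicInt.norm_def]
    exact hq1
  -- transfer Δ
  have hDnorm : ‖D‖ = (p : ℝ) ^ (-(Δ : ℤ)) := by
    rw [PadicInt.norm_eq_zpow_neg_valuation hD0, ← hΔ]
  rw [hDnorm] at MAIN
  have hKey : ∀ x : ℤ_[p], x ∣ w0 → ‖ᾱ - α i‖ < ‖x‖ :=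
    fun x hx => lt_of_lt_of_le (hclose.trans_le MAIN) (padic_norm_dvd_le hx)
  -- identify fi
  have hfi_eq : fi = (∏ j ∈ Finset.univ.erase i, (X - C (α j)) ^ e j) * ∏ j, g j ^ t j := by
    apply mul_left_cancel₀ (pow_ne_zero (e i) (X_sub_C_ne_zero (α i)))
    rw [← hfi, hfact, ← Finset.mul_prod_erase Finset.univ (fun j => (X - C (α j)) ^ e j)
      (Finset.mem_univ i)]
    ring
  -- per-factor equalities
  have eq1 : ∀ j ∈ Finset.univ.erase i, ‖ᾱ - α j‖ = ‖α i - α j‖ := by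
    intro j hj
    have hdvd : (α i - α j) ∣ w0 := by
      rw [hw0eval]
      exact dvd_mul_of_dvd_left (Finset.dvd_prod_of_mem _ hj) _
    have : ᾱ - α j = (ᾱ - α i) + (α i - α j) := by ring
    rw [this]
    exact padic_norm_add_eq (hKey _ hdvd)
  have eq2 : ∀ j, ‖(g j).eval ᾱ‖ = ‖(g j).eval (α i)‖ := by
    intro j
    have hdvd : (g j).eval (α i) ∣ w0 := by
      rw [hw0eval]
      exact dvd_mul_of_dvd_right (Finset.dvd_prod_of_mem _ (Finset.mem_univ j)) _
    have hsub : ‖(g j).eval ᾱ - (g j).eval (α i)‖ < ‖(g j).eval (α i)‖ := by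
      have h1 : ‖(g j).eval ᾱ - (g j).eval (α i)‖ ≤ ‖ᾱ - α i‖ :=
        padic_norm_dvd_le (sub_dvd_eval_sub ᾱ (α i) (g j))
      exact lt_of_le_of_lt h1 (hKey _ hdvd)
    have : (g j).eval ᾱ = ((g j).eval ᾱ - (g j).eval (α i)) + (g j).eval (α i) := by ring
    rw [this]
    exact padic_norm_add_eq hsub
  rw [hfi_eq]
  simp only [eval_mul, eval_prod, eval_pow, eval_sub, eval_X, eval_C]
  rw [norm_mul, norm_mul, padic_norm_prod, padic_norm_prod,
    padic_norm_prod, padic_norm_prod]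
  congr 1
  · exact Finset.prod_congr rfl fun j hj => by
      rw [norm_pow, norm_pow, eq1 j hj]
  · exact Finset.prod_congr rfl fun j _ => by
      rw [norm_pow, norm_pow, eq2 j]
end

section
/- Fix a prime p, integers e ≥ 1, ν ≥ 0, and k_1 ≥ 1 with e | (k_1 − ν). Then the formal power series Σ_{k=k_1}^∞ p^{k − ⌈(k−ν)/e⌉} (t/p)^k equals the rational function t^{k_1}·(p − t(p−1) − t^e) / ( p^{(k_1−ν)/e} · (1 − t) · (p − t^e) ). -/
open PowerSeries

/-- Closed form for one neighborhood's contribution to the Poincaré series: for a prime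
`p`, `e ≥ 1`, `ν ≥ 0`, `k₁ ≥ 1` with `e ∣ (k₁ - ν)`, the formal power series
`Σ_{k ≥ k₁} p^{k - ⌈(k-ν)/e⌉} (t/p)^k` equals
`t^{k₁}(p - t(p-1) - t^e) / (p^{(k₁-ν)/e} (1-t)(p-t^e))`, as an identity of formal
power series over `ℚ` after clearing denominators. -/
theorem stmt14 (p : ℕ) (hp : p.Prime) (e ν k₁ : ℕ) (he : 1 ≤ e) (hk₁ : 1 ≤ k₁)
    (hdvd : (e : ℤ) ∣ ((k₁ : ℤ) - (ν : ℤ))) :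
    (PowerSeries.mk fun k : ℕ =>
        if k₁ ≤ k then
          (p : ℚ) ^ ((k : ℤ) - ⌈((k : ℚ) - (ν : ℚ)) / (e : ℚ)⌉) / (p : ℚ) ^ k
        else 0) *
      (PowerSeries.C ((p : ℚ) ^ (((k₁ : ℤ) - (ν : ℤ)) / (e : ℤ))) *
        ((1 - PowerSeries.X) * (PowerSeries.C (p : ℚ) - PowerSeries.X ^ e)))
    = PowerSeries.X ^ k₁ *
        (PowerSeries.C (p : ℚ) - PowerSeries.C ((p : ℚ) - 1) * PowerSeries.X
          - PowerSeries.X ^ e) := by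
  have hp0 : (p : ℚ) ≠ 0 := Nat.cast_ne_zero.mpr hp.ne_zero
  have he0 : (0:ℚ) < (e:ℚ) := by exact_mod_cast he
  set m : ℤ := ((k₁ : ℤ) - (ν : ℤ)) / (e : ℤ) with hm
  have hme : m * (e:ℤ) = (k₁:ℤ) - (ν:ℤ) := Int.ediv_mul_cancel hdvd
  have hmQ : (k₁:ℚ) - (ν:ℚ) = (m:ℚ) * (e:ℚ) := by exact_mod_cast hme.symm
  -- ceiling shift lemma
  have hceil : ∀ k : ℕ, ⌈((k:ℚ) - (ν:ℚ)) / (e:ℚ)⌉ = m + ⌈((k:ℚ) - (k₁:ℚ)) / (e:ℚ)⌉ := by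
    intro k
    have h1 : ((k:ℚ) - (ν:ℚ)) / (e:ℚ) = ((k:ℚ) - (k₁:ℚ)) / (e:ℚ) + (m:ℚ) := by
      field_simp
      linarith [hmQ]
    rw [h1, Int.ceil_add_intCast, add_comm]
  have hc1 : ⌈((k₁:ℚ) - (ν:ℚ)) / (e:ℚ)⌉ = m := by
    rw [hceil k₁]
    simp
  have hc2 : ∀ k : ℕ, k₁ < k → k ≤ k₁ + e → ⌈((k:ℚ) - (ν:ℚ)) / (e:ℚ)⌉ = m + 1 := by
    intro k h1 h2
    rw [hceil k]
    congr 1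
    rw [Int.ceil_eq_iff]
    constructor
    · push_cast
      have : (0:ℚ) < (k:ℚ) - (k₁:ℚ) := by
        have : (k₁:ℚ) < (k:ℚ) := by exact_mod_cast h1
        linarith
      have := div_pos this he0
      linarith
    · push_cast
      rw [div_le_one he0]
      have : (k:ℚ) ≤ (k₁:ℚ) + (e:ℚ) := by exact_mod_cast h2
      linarith
  have hstep : ∀ k : ℕ, e ≤ k →
      ⌈((k:ℚ) - (ν:ℚ)) / (e:ℚ)⌉ = ⌈(((k - e : ℕ):ℚ) - (ν:ℚ)) / (e:ℚ)⌉ + 1 := by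
    intro k hek
    have hke : ((k - e : ℕ):ℚ) = (k:ℚ) - (e:ℚ) := by
      have h := (Nat.cast_sub hek : ((k - e : ℕ):ℚ) = (k:ℚ) - (e:ℚ))
      linarith
    rw [hke]
    rw [← Int.ceil_add_one]
    congr 1
    field_simp
    ring
  -- value of coefficients
  set c : ℕ → ℤ := fun k => ⌈((k:ℚ) - (ν:ℚ)) / (e:ℚ)⌉ with hc
  set a : ℕ → ℚ := fun k => if k₁ ≤ k then (p:ℚ) ^ (-(c k)) else 0 with ha
  have hval : (PowerSeries.mk fun k : ℕ =>
        if k₁ ≤ k then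
          (p : ℚ) ^ ((k : ℤ) - ⌈((k : ℚ) - (ν : ℚ)) / (e : ℚ)⌉) / (p : ℚ) ^ k
        else 0) = PowerSeries.mk a := by
    have hfun : (fun k : ℕ =>
        if k₁ ≤ k then
          (p : ℚ) ^ ((k : ℤ) - ⌈((k : ℚ) - (ν : ℚ)) / (e : ℚ)⌉) / (p : ℚ) ^ k
        else 0) = a := by
      funext k
      simp only [ha]
      split
      · rw [div_eq_mul_inv, ← zpow_natCast (p:ℚ) k, ← zpow_neg, ← zpow_add₀ hp0]
        congr 1
        ring
      · rfl
    rw [hfun]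
  rw [hval]
  set P : ℚ := (p:ℚ) ^ m with hP
  have hP0 : P ≠ 0 := zpow_ne_zero m hp0
  have expand : (PowerSeries.mk a) *
      (PowerSeries.C P * ((1 - PowerSeries.X) * (PowerSeries.C (p:ℚ) - PowerSeries.X ^ e)))
      = PowerSeries.C (P * p) * (PowerSeries.mk a)
        - PowerSeries.C (P * p) * (PowerSeries.mk a * PowerSeries.X ^ 1)
        - PowerSeries.C P * (PowerSeries.mk a * PowerSeries.X ^ e)
        + PowerSeries.C P * (PowerSeries.mk a * PowerSeries.X ^ (e + 1)) := by
    simp only [map_mul]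
    ring
  rw [expand]
  have expandR : (PowerSeries.X (R := ℚ)) ^ k₁ *
        (PowerSeries.C (p : ℚ) - PowerSeries.C ((p : ℚ) - 1) * PowerSeries.X
          - PowerSeries.X ^ e)
      = PowerSeries.C (p:ℚ) * PowerSeries.X ^ k₁
        - PowerSeries.C ((p:ℚ) - 1) * PowerSeries.X ^ (k₁ + 1)
        - PowerSeries.X ^ (k₁ + e) := by
    ring
  rw [expandR]
  ext n
  simp only [map_add, map_sub, PowerSeries.coeff_C_mul, PowerSeries.coeff_mul_X_pow',
    PowerSeries.coeff_mk, PowerSeries.coeff_X_pow, PowerSeries.coeff_C]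
  -- auxiliary facts
  have ha0 : ∀ j, j < k₁ → a j = 0 := fun j hj => if_neg (by omega)
  have haA : ∀ j, k₁ ≤ j → a j = (p:ℚ) ^ (-(c j)) := fun j hj => if_pos hj
  have hu : P * (p:ℚ) ^ (-m) = 1 := by
    rw [hP, ← zpow_add₀ hp0]
    simp
  have hsplit : ∀ x : ℤ, (p:ℚ) ^ (-(x+1)) = (p:ℚ) ^ (-x) * (p:ℚ)⁻¹ := by
    intro x
    rw [← zpow_neg_one, ← zpow_add₀ hp0]
    ring_nf
  have key : ∀ x : ℤ, (p:ℚ) * (p:ℚ) ^ (-(x+1)) = (p:ℚ) ^ (-x) := by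
    intro x
    rw [hsplit x]
    field_simp
  have hv : (p:ℚ) * (P * (p:ℚ) ^ (-(m+1))) = 1 := by
    rw [show (p:ℚ) * (P * (p:ℚ) ^ (-(m+1))) = P * ((p:ℚ) * (p:ℚ) ^ (-(m+1))) from by ring,
      key m, hu]
  have hck : c k₁ = m := hc1
  rcases lt_or_ge n k₁ with hA | hge
  · -- n < k₁ : everything vanishes
    rw [ha0 n hA, ha0 (n-1) (by omega), ha0 (n-e) (by omega), ha0 (n-(e+1)) (by omega),
      if_neg (show ¬ k₁ ≤ n by omega), if_neg (show ¬ k₁ + 1 ≤ n by omega),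
      if_neg (show ¬ n = k₁ + e by omega)]
    simp
  rcases eq_or_lt_of_le hge with hB | hgt
  · -- n = k₁
    have hcnB : c n = m := by rw [← hB]; exact hck
    rw [haA n (by omega), hcnB, ha0 (n-1) (by omega), ha0 (n-e) (by omega),
      ha0 (n-(e+1)) (by omega)]
    simp only [ite_self]
    rw [if_pos (show k₁ ≤ n by omega), if_pos (show n - k₁ = 0 by omega),
      if_neg (show ¬ k₁ + 1 ≤ n by omega), if_neg (show ¬ n = k₁ + e by omega)]
    linear_combination (p:ℚ) * hu
  rcases le_or_gt n (k₁ + e) with hC | hD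
  · -- k₁ < n ≤ k₁ + e
    have hcn : c n = m + 1 := hc2 n hgt hC
    have han : a n = (p:ℚ) ^ (-(m+1)) := by rw [haA n (le_of_lt hgt), hcn]
    rw [han, if_pos (show 1 ≤ n by omega), if_pos (show k₁ ≤ n by omega),
      if_neg (show ¬ n - k₁ = 0 by omega)]
    rcases eq_or_lt_of_le (show k₁ + 1 ≤ n by omega) with h1 | h1
    · -- n = k₁ + 1
      have han1 : a (n - 1) = (p:ℚ) ^ (-m) := by
        rw [show n - 1 = k₁ by omega, haA k₁ le_rfl, hck]
      rw [han1, if_pos (show k₁ + 1 ≤ n by omega), if_pos (show n - (k₁+1) = 0 by omega), if_pos (show n - (k₁+1) = 0 by omega)]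
      rcases eq_or_lt_of_le hC with h2 | h2
      · -- n = k₁ + e (so e = 1)
        have hane : a (n - e) = (p:ℚ) ^ (-m) := by
          rw [show n - e = k₁ by omega, haA k₁ le_rfl, hck]
        rw [hane, ha0 (n-(e+1)) (by omega), if_pos (show e ≤ n by omega),
          if_pos h2]
        simp only [ite_self]
        linear_combination hv - (p:ℚ) * hu - hu
      · -- n < k₁ + e
        rw [ha0 (n-e) (by omega), ha0 (n-(e+1)) (by omega),
          if_neg (show ¬ n = k₁ + e by omega)]
        simp only [ite_self]
        linear_combination hv - (p:ℚ) * hu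
    · -- k₁ + 1 < n ≤ k₁ + e
      have hcm1 : c (n - 1) = m + 1 := hc2 (n-1) (by omega) (by omega)
      have han1 : a (n - 1) = (p:ℚ) ^ (-(m+1)) := by
        rw [haA (n-1) (by omega), hcm1]
      rw [han1, if_pos (show k₁ + 1 ≤ n by omega),
        if_neg (show ¬ n - (k₁+1) = 0 by omega), if_neg (show ¬ n - (k₁+1) = 0 by omega), ha0 (n-(e+1)) (by omega)]
      rcases eq_or_lt_of_le hC with h2 | h2
      · -- n = k₁ + e
        have hane : a (n - e) = (p:ℚ) ^ (-m) := by
          rw [show n - e = k₁ by omega, haA k₁ le_rfl, hck]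
        rw [hane, if_pos (show e ≤ n by omega), if_pos h2]
        simp only [ite_self]
        linear_combination -hu
      · -- n < k₁ + e
        rw [ha0 (n-e) (by omega), if_neg (show ¬ n = k₁ + e by omega)]
        simp only [ite_self]
        ring
  · -- n > k₁ + e
    have hcn : c n = c (n - e) + 1 := hstep n (by omega)
    have hcn1 : c (n - 1) = c (n - (e+1)) + 1 := by
      have h := hstep (n-1) (by omega)
      rwa [show n - 1 - e = n - (e+1) by omega] at h
    rw [haA n (by omega), haA (n-1) (by omega), haA (n-e) (by omega),
      haA (n-(e+1)) (by omega), hcn, hcn1,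
      if_pos (show 1 ≤ n by omega), if_pos (show e ≤ n by omega),
      if_pos (show e + 1 ≤ n by omega), if_pos (show k₁ ≤ n by omega),
      if_neg (show ¬ n - k₁ = 0 by omega), if_pos (show k₁ + 1 ≤ n by omega),
      if_neg (show ¬ n - (k₁+1) = 0 by omega), if_neg (show ¬ n - (k₁+1) = 0 by omega),
      if_neg (show ¬ n = k₁ + e by omega)]
    linear_combination P * key (c (n - e)) - P * key (c (n - (e+1)))
end

section
/- Let f ∈ ℤ_p[x] of degree d with N_k(f) the number of roots of f mod p^k. Then the Poincaré series P(t) = Σ_{k=0}^∞ N_k(f)(t/p)^k (with N_0 = 1) is a rational function of t; moreover it can be written as A(t)/B(t) with B(t) = (1−t)·∏_{i=1}^n (p − t^{e_i}), where e_1,…,e_n are the multiplicities of the ℤ_p-roots of f, so deg B ≤ 1 + d. -/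
open Polynomial

/-- The number of roots of `f` modulo `p^k`.  Note `Nk p 0 f = 1`. -/
noncomputable def Nk (p : ℕ) [Fact p.Prime] (k : ℕ) (f : Polynomial ℤ_[p]) : ℕ :=
  Set.ncard {a : ZMod (p ^ k) | (f.map (PadicInt.toZModPow k)).eval a = 0}

section PoincareAux

lemma count_mod (M Q r : ℕ) (hr : r < M) :
    ((Finset.range (M * Q)).filter (fun n => n % M = r)).card = Q := by
  have hM : 0 < M := lt_of_le_of_lt (Nat.zero_le r) hr
  have key : ((Finset.range (M * Q)).filter (fun n => n % M = r)).card
      = (Finset.range Q).card := by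
    apply Finset.card_nbij' (fun n => n / M) (fun j => r + M * j)
    · intro a ha
      simp only [Finset.mem_coe, Finset.mem_filter, Finset.mem_range] at ha ⊢
      exact Nat.div_lt_of_lt_mul (by omega)
    · intro j hj
      simp only [Finset.mem_coe, Finset.mem_range] at hj
      simp only [Finset.mem_coe, Finset.mem_filter, Finset.mem_range]
      constructor
      · calc r + M * j < M + M * j := by omega
          _ = M * (j + 1) := by ring
          _ ≤ M * Q := Nat.mul_le_mul_left _ (by omega)
      · rw [Nat.add_mul_mod_self_left, Nat.mod_eq_of_lt hr]
    · intro a ha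
      simp only [Finset.mem_coe, Finset.mem_filter, Finset.mem_range] at ha
      rw [← ha.2]
      exact (Nat.mod_add_div a M)
    · intro j hj
      show (r + M * j) / M = j
      rw [Nat.add_mul_div_left _ _ hM, Nat.div_eq_of_lt hr, zero_add]
  rw [key, Finset.card_range]

lemma ev_zero_poly (S : PowerSeries ℚ) (K : ℕ)
    (h : ∀ k, K ≤ k → PowerSeries.coeff k S = 0) :
    ∃ A : Polynomial ℚ, S = (A : PowerSeries ℚ) := by
  refine ⟨S.trunc K, ?_⟩
  ext k
  rw [Polynomial.coeff_coe, PowerSeries.coeff_trunc]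
  split_ifs with hk
  · rfl
  · exact (h k (le_of_not_gt hk))


lemma shift_poly (p : ℕ) (a : ℕ → ℚ) (e K : ℕ)
    (hrec : ∀ k, K ≤ k → (p : ℚ) * a (k + e) = a k) :
    ∃ A : Polynomial ℚ,
      PowerSeries.mk a * ((Polynomial.C (p : ℚ) - Polynomial.X ^ e : Polynomial ℚ) : PowerSeries ℚ)
        = (A : PowerSeries ℚ) := by
  apply ev_zero_poly _ (K + e)
  intro k hk
  have he : e ≤ k := le_trans (Nat.le_add_left _ _) hk
  rw [Polynomial.coe_sub, Polynomial.coe_C, Polynomial.coe_pow, Polynomial.coe_X,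
    mul_sub, map_sub, PowerSeries.coeff_mul_C, PowerSeries.coeff_mul_X_pow',
    if_pos he, PowerSeries.coeff_mk, PowerSeries.coeff_mk]
  have := hrec (k - e) (by omega)
  rw [Nat.sub_add_cancel he] at this
  rw [← this]; ring

variable {p : ℕ} [hp : Fact p.Prime]


lemma norm_le_iff_dvd (x : ℤ_[p]) (k : ℕ) :
    ‖x‖ ≤ (p : ℝ) ^ (-(k : ℤ)) ↔ PadicInt.toZModPow k x = 0 := by
  rw [PadicInt.norm_le_pow_iff_mem_span_pow, ← PadicInt.ker_toZModPow, RingHom.mem_ker]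

lemma ball_count (k mm : ℕ) (β : ℤ_[p]) (hm : mm ≤ k) :
    ((Finset.range (p ^ k)).filter
      (fun nn : ℕ => ‖(nn : ℤ_[p]) - β‖ ≤ (p : ℝ) ^ (-(mm : ℤ)))).card = p ^ (k - mm) := by
  classical
  haveI : NeZero (p ^ mm) := ⟨(pow_pos hp.out.pos mm).ne'⟩
  let b : ZMod (p ^ mm) := PadicInt.toZModPow mm β
  have hcond : ∀ nn : ℕ, (‖(nn : ℤ_[p]) - β‖ ≤ (p : ℝ) ^ (-(mm : ℤ))) ↔ nn % p ^ mm = b.val := by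
    intro nn
    rw [norm_le_iff_dvd, map_sub, sub_eq_zero, map_natCast]
    constructor
    · intro h
      show nn % p ^ mm = (PadicInt.toZModPow mm β).val
      rw [← h, ZMod.val_natCast]
    · intro h
      apply ZMod.val_injective
      rw [ZMod.val_natCast]
      exact h
  have hsplit : p ^ k = p ^ mm * p ^ (k - mm) := by
    rw [← pow_add, Nat.add_sub_cancel' hm]
  calc ((Finset.range (p ^ k)).filter
      (fun nn : ℕ => ‖(nn : ℤ_[p]) - β‖ ≤ (p : ℝ) ^ (-(mm : ℤ)))).card
      = ((Finset.range (p ^ mm * p ^ (k - mm))).filter (fun nn : ℕ => nn % p ^ mm = b.val)).card := by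
        rw [← hsplit]
        congr 1
        apply Finset.filter_congr
        intro x _
        simp only [hcond x]
    _ = p ^ (k - mm) := count_mod _ _ _ (ZMod.val_lt b)




lemma Nk_eq_count (k : ℕ) (f : Polynomial ℤ_[p]) :
    Nk p k f = ((Finset.range (p ^ k)).filter
      (fun nn : ℕ => ‖f.eval (nn : ℤ_[p])‖ ≤ (p : ℝ) ^ (-(k : ℤ)))).card := by
  classical
  haveI : NeZero (p ^ k) := ⟨(pow_pos hp.out.pos k).ne'⟩
  have key : ∀ x : ℤ_[p],
      (f.map (PadicInt.toZModPow k)).eval (PadicInt.toZModPow k x) = PadicInt.toZModPow k (f.eval x) := by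
    intro x
    rw [Polynomial.eval_map, Polynomial.eval₂_at_apply]
  have hmem : ∀ nn : ℕ, ((f.map (PadicInt.toZModPow k)).eval (nn : ZMod (p ^ k)) = 0)
      ↔ ‖f.eval (nn : ℤ_[p])‖ ≤ (p : ℝ) ^ (-(k : ℤ)) := by
    intro nn
    rw [norm_le_iff_dvd, ← key, map_natCast]
  rw [Nk, Set.ncard_eq_toFinset_card']
  rw [show {a : ZMod (p ^ k) | (f.map (PadicInt.toZModPow k)).eval a = 0}.toFinset
      = Finset.univ.filter (fun a : ZMod (p ^ k) => (f.map (PadicInt.toZModPow k)).eval a = 0) by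
    ext a; simp]
  symm
  apply Finset.card_nbij (fun nn : ℕ => (nn : ZMod (p ^ k)))
  · intro a ha
    simp only [Finset.mem_coe, Finset.mem_filter, Finset.mem_range, Finset.mem_univ, true_and] at ha ⊢
    rw [hmem]; exact ha.2
  · intro a ha a' ha' hh
    simp only [Finset.coe_filter, Finset.mem_range, Set.mem_setOf_eq] at ha ha'
    have := congrArg ZMod.val hh
    rwa [ZMod.val_natCast, ZMod.val_natCast, Nat.mod_eq_of_lt ha.1, Nat.mod_eq_of_lt ha'.1] at this
  · intro a ha
    simp only [Finset.coe_filter, Finset.mem_univ, true_and, Set.mem_setOf_eq] at ha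
    refine ⟨a.val, ?_, ZMod.natCast_rightInverse a⟩
    simp only [Finset.coe_filter, Finset.mem_range, Set.mem_setOf_eq]
    refine ⟨ZMod.val_lt a, ?_⟩
    rw [← hmem, ZMod.natCast_rightInverse a]
    exact ha

def sig (ν e k : ℕ) : ℕ := (k - ν + e - 1) / e

lemma sig_le_iff {ν e k w : ℕ} (he : 1 ≤ e) (hν : ν ≤ k) : sig ν e k ≤ w ↔ k ≤ e * w + ν := by
  rw [sig, Nat.div_le_iff_le_mul_add_pred he]
  omega

lemma mul_sig {ν e k : ℕ} (he : 1 ≤ e) (hν : ν ≤ k) : k ≤ e * sig ν e k + ν :=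
  (sig_le_iff he hν).1 le_rfl

lemma sig_le_self {ν e k : ℕ} (he : 1 ≤ e) (hν : ν ≤ k) : sig ν e k ≤ k := by
  rw [sig_le_iff he hν]
  have := Nat.mul_le_mul_right k he
  omega

lemma le_sig {ν e k s : ℕ} (he : 1 ≤ e) (h : ν + e * s ≤ k) : s ≤ sig ν e k := by
  have h2 := mul_sig he (by omega : ν ≤ k)
  have : e * s ≤ e * sig ν e k := by omega
  exact Nat.le_of_mul_le_mul_left this (by omega)

lemma sig_succ {ν e k : ℕ} (he : 1 ≤ e) (hν : ν ≤ k) : sig ν e (k + e) = sig ν e k + 1 := by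
  rw [sig, sig, show k + e - ν + e - 1 = (k - ν + e - 1) + e by omega, Nat.add_div_right _ he]


noncomputable def pnormHom : ℤ_[p] →* ℝ where
  toFun := fun x => ‖x‖
  map_one' := norm_one
  map_mul' := norm_mul

lemma norm_eval_sub_le (P : Polynomial ℤ_[p]) (x y : ℤ_[p]) :
    ‖P.eval x - P.eval y‖ ≤ ‖x - y‖ := by
  obtain ⟨c, hc⟩ := Polynomial.sub_dvd_eval_sub x y P
  rw [hc, norm_mul]
  calc ‖x - y‖ * ‖c‖ ≤ ‖x - y‖ * 1 := by
        apply mul_le_mul_of_nonneg_left (PadicInt.norm_le_one c) (norm_nonneg _)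
    _ = ‖x - y‖ := mul_one _

lemma zpow_helper (w E v : ℕ) : ((p : ℝ) ^ (-(w : ℤ))) ^ E * (p : ℝ) ^ (-(v : ℤ))
    = (p : ℝ) ^ (-((w * E + v : ℕ) : ℤ)) := by
  have hp0 : (p : ℝ) ≠ 0 := by
    have := hp.out.pos; positivity
  rw [← zpow_natCast (((p : ℝ)) ^ (-(w : ℤ))) E, ← zpow_mul, ← zpow_add₀ hp0]
  congr 1
  push_cast
  ring

lemma main_count (f : Polynomial ℤ_[p])
    {n m : ℕ} (α : Fin n → ℤ_[p]) (e : Fin n → ℕ) (he : ∀ i, 1 ≤ e i)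
    (hα : Function.Injective α)
    (g : Fin m → Polynomial ℤ_[p]) (t : Fin m → ℕ)
    (hg_noroot : ∀ j (x : ℤ_[p]), (g j).eval x ≠ 0)
    (hfact : f = (∏ i, (X - C (α i)) ^ e i) * ∏ j, g j ^ t j) :
    ∃ (K : ℕ) (ν : Fin n → ℕ), (∀ i, ν i ≤ K) ∧
      ∀ k, K ≤ k → Nk p k f = ∑ i, p ^ (k - sig (ν i) (e i) k) := by
  classical
  have hp1 : (1 : ℝ) < p := by exact_mod_cast hp.out.one_lt
  have hppos : (0 : ℝ) < p := lt_trans zero_lt_one hp1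
  have hmono : ∀ a b : ℕ, a ≤ b → (p : ℝ) ^ (-(b : ℤ)) ≤ (p : ℝ) ^ (-(a : ℤ)) := by
    intro a b h
    rw [zpow_le_zpow_iff_right₀ hp1]
    omega
  set G := ∏ j, g j ^ t j with hG
  have hGne : ∀ x, G.eval x ≠ 0 := by
    intro x
    rw [hG, eval_prod]
    apply Finset.prod_ne_zero_iff.2
    intro j _
    rw [eval_pow]
    exact pow_ne_zero _ (hg_noroot j x)
  have hnorm_eval : ∀ x, ‖f.eval x‖ = (∏ i, ‖x - α i‖ ^ e i) * ‖G.eval x‖ := by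
    intro x
    rw [hfact, eval_mul, norm_mul]
    congr 1
    have h1 : (∏ i, (X - C (α i)) ^ e i).eval x = ∏ i, (x - α i) ^ e i := by
      simp [eval_prod]
    rw [h1]
    have h2 : ‖∏ i, (x - α i) ^ e i‖ = pnormHom (∏ i, (x - α i) ^ e i) := rfl
    rw [h2, map_prod]
    apply Finset.prod_congr rfl
    intro i _
    rw [map_pow]
    rfl
  -- choose s
  have hchoice : ∀ r : ℝ, 0 < r → ∃ sr : ℕ, (p : ℝ) ^ (-(sr : ℤ)) < r := by
    intro r hr
    obtain ⟨sr, hsr⟩ := exists_pow_lt_of_lt_one hr (show (p : ℝ)⁻¹ < 1 by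
      rw [inv_lt_one_iff₀]; right; exact hp1)
    refine ⟨sr, ?_⟩
    rw [zpow_neg, zpow_natCast, ← inv_pow]
    exact hsr
  have hchoice1 : ∀ i : Fin n, ∃ sr : ℕ, (p : ℝ) ^ (-(sr : ℤ)) < ‖G.eval (α i)‖ :=
    fun i => hchoice _ (norm_pos_iff.2 (hGne _))
  choose s1 hs1 using hchoice1
  have hchoice2 : ∀ ij : Fin n × Fin n, ∃ sr : ℕ,
      ij.1 ≠ ij.2 → (p : ℝ) ^ (-(sr : ℤ)) < ‖α ij.1 - α ij.2‖ := by
    intro ij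
    by_cases hij : ij.1 = ij.2
    · exact ⟨0, fun h => absurd hij h⟩
    · obtain ⟨sr, hsr⟩ := hchoice _ (norm_pos_iff.2 (sub_ne_zero.2 (fun hc => hij (hα hc))))
      exact ⟨sr, fun _ => hsr⟩
  choose s2 hs2 using hchoice2
  set s : ℕ := max (Finset.univ.sup s1) (Finset.univ.sup s2) with hs
  have hs1' : ∀ i, (p : ℝ) ^ (-(s : ℤ)) < ‖G.eval (α i)‖ := by
    intro i
    refine lt_of_le_of_lt (hmono _ _ ?_) (hs1 i)
    exact le_trans (Finset.le_sup (Finset.mem_univ i)) (le_max_left _ _)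
  have hs2' : ∀ i j, i ≠ j → (p : ℝ) ^ (-(s : ℤ)) < ‖α i - α j‖ := by
    intro i j hij
    refine lt_of_le_of_lt (hmono _ _ ?_) (hs2 (i, j) hij)
    exact le_trans (Finset.le_sup (Finset.mem_univ (i, j))) (le_max_right _ _)
  -- global lower bound M
  have hcont : Continuous (fun x : ℤ_[p] => ‖G.eval x‖) := (Polynomial.continuous G).norm
  obtain ⟨x₀, -, hx₀'⟩ := (isCompact_univ : IsCompact (Set.univ : Set ℤ_[p])).exists_isMinOn
    ⟨0, Set.mem_univ 0⟩ hcont.continuousOn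
  have hx₀ : ∀ y : ℤ_[p], ‖G.eval x₀‖ ≤ ‖G.eval y‖ := fun y => hx₀' (Set.mem_univ y)
  obtain ⟨M, hMlt⟩ := hchoice _ (norm_pos_iff.2 (hGne x₀))
  have hM : ∀ x, (p : ℝ) ^ (-(M : ℤ)) ≤ ‖G.eval x‖ :=
    fun x => le_trans (le_of_lt hMlt) (hx₀ x)
  -- the constants ν
  set c : Fin n → ℤ_[p] :=
    fun i => (∏ j ∈ Finset.univ.erase i, (α i - α j) ^ e j) * G.eval (α i) with hc
  have hcne : ∀ i, c i ≠ 0 := by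
    intro i
    apply mul_ne_zero _ (hGne _)
    apply Finset.prod_ne_zero_iff.2
    intro j hj
    exact pow_ne_zero _ (sub_ne_zero.2 (fun hcon => (Finset.ne_of_mem_erase hj) (hα hcon).symm))
  set ν : Fin n → ℕ := fun i => ((c i).valuation) with hνdef
  have hν : ∀ i, ‖c i‖ = (p : ℝ) ^ (-(ν i : ℤ)) := by
    intro i
    rw [PadicInt.norm_eq_zpow_neg_valuation (hcne i)]
  -- HL
  have HL : ∀ i (x : ℤ_[p]), ‖x - α i‖ ≤ (p : ℝ) ^ (-(s : ℤ)) →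
      ‖f.eval x‖ = ‖x - α i‖ ^ e i * ‖c i‖ := by
    intro i x hx
    have hxj : ∀ j, j ≠ i → ‖x - α j‖ = ‖α i - α j‖ := by
      intro j hj
      have hlt : ‖x - α i‖ < ‖α i - α j‖ := lt_of_le_of_lt hx (hs2' i j (Ne.symm hj))
      have hre : x - α j = (x - α i) + (α i - α j) := by ring
      rw [hre, PadicInt.norm_add_eq_max_of_ne (ne_of_lt hlt), max_eq_right (le_of_lt hlt)]
    have hgx : ‖G.eval x‖ = ‖G.eval (α i)‖ := by
      have hlt : ‖G.eval x - G.eval (α i)‖ < ‖G.eval (α i)‖ :=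
        lt_of_le_of_lt (le_trans (norm_eval_sub_le G x (α i)) hx) (hs1' i)
      have hre : G.eval x = G.eval (α i) + (G.eval x - G.eval (α i)) := by ring
      rw [hre, PadicInt.norm_add_eq_max_of_ne (ne_of_lt hlt).symm, max_eq_left (le_of_lt hlt)]
    rw [hnorm_eval, ← Finset.mul_prod_erase Finset.univ _ (Finset.mem_univ i), hgx]
    have hprod : ∏ j ∈ Finset.univ.erase i, ‖x - α j‖ ^ e j
        = ∏ j ∈ Finset.univ.erase i, ‖α i - α j‖ ^ e j :=
      Finset.prod_congr rfl (fun j hj => by rw [hxj j (Finset.ne_of_mem_erase hj)])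
    rw [hprod]
    have hcnorm : ‖c i‖ = (∏ j ∈ Finset.univ.erase i, ‖α i - α j‖ ^ e j) * ‖G.eval (α i)‖ := by
      have : ‖c i‖ = pnormHom (c i) := rfl
      rw [this, hc, map_mul, map_prod]
      have : ∀ j, pnormHom ((α i - α j) ^ e j) = ‖α i - α j‖ ^ e j := by
        intro j; rw [map_pow]; rfl
      simp only [this]
      rfl
    rw [hcnorm]
    ring
  -- HG
  set K₀ : ℕ := s * (∑ i, e i) + M with hK₀
  have HG : ∀ x : ℤ_[p], (∀ i, (p : ℝ) ^ (-(s : ℤ)) < ‖x - α i‖) →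
      (p : ℝ) ^ (-(K₀ : ℤ)) ≤ ‖f.eval x‖ := by
    intro x hx
    rw [hnorm_eval]
    have h1 : (p : ℝ) ^ (-((s * ∑ i, e i : ℕ) : ℤ)) ≤ ∏ i, ‖x - α i‖ ^ e i := by
      have hstep : (p : ℝ) ^ (-((s * ∑ i, e i : ℕ) : ℤ))
          = ∏ i, ((p : ℝ) ^ (-(s : ℤ))) ^ e i := by
        rw [Finset.prod_pow_eq_pow_sum, ← zpow_natCast ((p : ℝ) ^ (-(s : ℤ))), ← zpow_mul]
        congr 1
        push_cast
        ring
      rw [hstep]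
      apply Finset.prod_le_prod
      · intro i _; positivity
      · intro i _
        exact pow_le_pow_left₀ (by positivity) (le_of_lt (hx i)) _
    have h2 := hM x
    have hsplit : (p : ℝ) ^ (-(K₀ : ℤ))
        = (p : ℝ) ^ (-((s * ∑ i, e i : ℕ) : ℤ)) * (p : ℝ) ^ (-(M : ℤ)) := by
      rw [← zpow_add₀ (ne_of_gt hppos)]
      congr 1
      rw [hK₀]
      push_cast
      ring
    rw [hsplit]
    exact mul_le_mul h1 h2 (by positivity) (le_trans (by positivity) h1)
  -- the threshold K
  set K : ℕ := max (Finset.univ.sup fun i => ν i + e i * s) (K₀ + 1) with hK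
  refine ⟨K, ν, ?_, ?_⟩
  · intro i
    calc ν i ≤ ν i + e i * s := Nat.le_add_right _ _
      _ ≤ Finset.univ.sup (fun i => ν i + e i * s) := Finset.le_sup (f := fun i => ν i + e i * s) (Finset.mem_univ i)
      _ ≤ K := le_max_left _ _
  intro k hk
  have hνk : ∀ i, ν i ≤ k := by
    intro i
    calc ν i ≤ ν i + e i * s := Nat.le_add_right _ _
      _ ≤ Finset.univ.sup (fun i => ν i + e i * s) := Finset.le_sup (f := fun i => ν i + e i * s) (Finset.mem_univ i)
      _ ≤ k := le_trans (le_max_left _ _) hk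
  have hsσ : ∀ i, s ≤ sig (ν i) (e i) k := by
    intro i
    apply le_sig (he i)
    calc ν i + e i * s ≤ Finset.univ.sup (fun i => ν i + e i * s) :=
        Finset.le_sup (f := fun i => ν i + e i * s) (Finset.mem_univ i)
      _ ≤ k := le_trans (le_max_left _ _) hk
  have hσk : ∀ i, sig (ν i) (e i) k ≤ k := fun i => sig_le_self (he i) (hνk i)
  rw [Nk_eq_count]
  have hiff : ∀ x : ℤ_[p], (‖f.eval x‖ ≤ (p : ℝ) ^ (-(k : ℤ))) ↔
      ∃ i, ‖x - α i‖ ≤ (p : ℝ) ^ (-(sig (ν i) (e i) k : ℤ)) := by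
    intro x
    constructor
    · intro hfx
      have hnear : ∃ i, ‖x - α i‖ ≤ (p : ℝ) ^ (-(s : ℤ)) := by
        by_contra hno
        push_neg at hno
        have hge := HG x hno
        have hlt : (p : ℝ) ^ (-(k : ℤ)) < (p : ℝ) ^ (-(K₀ : ℤ)) := by
          rw [zpow_lt_zpow_iff_right₀ hp1]
          have : K₀ + 1 ≤ k := le_trans (le_max_right _ _) hk
          omega
        linarith
      obtain ⟨i, hi⟩ := hnear
      refine ⟨i, ?_⟩
      have hfeq := HL i x hi
      by_cases hxz : x - α i = 0
      · rw [hxz, norm_zero]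
        positivity
      · have hw : ‖x - α i‖ = (p : ℝ) ^ (-(((x - α i).valuation : ℕ) : ℤ)) := by
          rw [PadicInt.norm_eq_zpow_neg_valuation hxz]
        set w : ℕ := (x - α i).valuation
        rw [hw]
        apply hmono
        have hle : ((p : ℝ) ^ (-(w : ℤ))) ^ e i * (p : ℝ) ^ (-(ν i : ℤ))
            ≤ (p : ℝ) ^ (-(k : ℤ)) := by
          rw [← hw, ← hν, ← hfeq]
          exact hfx
        rw [zpow_helper] at hle
        rw [zpow_le_zpow_iff_right₀ hp1] at hle
        have h3 : k ≤ w * e i + ν i := by exact_mod_cast neg_le_neg_iff.1 hle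
        rw [sig_le_iff (he i) (hνk i), Nat.mul_comm]
        exact h3
    · rintro ⟨i, hi⟩
      have his : ‖x - α i‖ ≤ (p : ℝ) ^ (-(s : ℤ)) := le_trans hi (hmono _ _ (hsσ i))
      rw [HL i x his, hν i]
      calc ‖x - α i‖ ^ e i * (p : ℝ) ^ (-(ν i : ℤ))
          ≤ ((p : ℝ) ^ (-(sig (ν i) (e i) k : ℤ))) ^ e i * (p : ℝ) ^ (-(ν i : ℤ)) := by
            apply mul_le_mul_of_nonneg_right (pow_le_pow_left₀ (norm_nonneg _) hi _)
            positivity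
        _ = (p : ℝ) ^ (-((sig (ν i) (e i) k * e i + ν i : ℕ) : ℤ)) := zpow_helper _ _ _
        _ ≤ (p : ℝ) ^ (-(k : ℤ)) := by
            apply hmono
            rw [Nat.mul_comm]
            exact mul_sig (he i) (hνk i)
  have hsplit : (Finset.range (p ^ k)).filter
        (fun nn : ℕ => ‖f.eval (nn : ℤ_[p])‖ ≤ (p : ℝ) ^ (-(k : ℤ)))
      = Finset.univ.biUnion (fun i : Fin n => (Finset.range (p ^ k)).filter
        (fun nn : ℕ => ‖(nn : ℤ_[p]) - α i‖ ≤ (p : ℝ) ^ (-(sig (ν i) (e i) k : ℤ)))) := by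
    ext nn
    simp only [Finset.mem_biUnion, Finset.mem_filter, Finset.mem_univ, true_and]
    constructor
    · rintro ⟨h1, h2⟩
      obtain ⟨i, hi⟩ := (hiff _).1 h2
      exact ⟨i, h1, hi⟩
    · rintro ⟨i, h1, hi⟩
      exact ⟨h1, (hiff _).2 ⟨i, hi⟩⟩
  rw [hsplit, Finset.card_biUnion]
  · exact Finset.sum_congr rfl (fun i _ => ball_count k _ _ (hσk i))
  · intro i _ j _ hij
    apply Finset.disjoint_left.2
    intro nn h1 h2
    simp only [Finset.mem_filter] at h1 h2
    have hi' : ‖(nn : ℤ_[p]) - α i‖ ≤ (p : ℝ) ^ (-(s : ℤ)) :=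
      le_trans h1.2 (hmono _ _ (hsσ i))
    have hj' : ‖(nn : ℤ_[p]) - α j‖ ≤ (p : ℝ) ^ (-(s : ℤ)) :=
      le_trans h2.2 (hmono _ _ (hsσ j))
    have hcontra : ‖α i - α j‖ ≤ (p : ℝ) ^ (-(s : ℤ)) := by
      have heq : α i - α j = ((nn : ℤ_[p]) - α j) + (-((nn : ℤ_[p]) - α i)) := by ring
      rw [heq]
      refine le_trans (PadicInt.nonarchimedean _ _) ?_
      rw [norm_neg]
      exact max_le hj' hi'
    exact absurd hcontra (not_le.2 (hs2' i j hij))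

end PoincareAux

/-- The Poincaré series `P(t) = Σ_k N_k(f) (t/p)^k` is a rational function of `t`:
it can be written as `A(t)/B(t)` with `B(t) = (1-t)·∏_i (p - t^{e_i})`, where the `e_i`
are the multiplicities of the `ℤ_p`-roots of `f`; in particular `deg B ≤ 1 + d`. -/
theorem stmt15 (p : ℕ) [Fact p.Prime] (f : Polynomial ℤ_[p]) (d : ℕ) (hd : d = f.natDegree)
    (n m : ℕ) (α : Fin n → ℤ_[p]) (e : Fin n → ℕ) (he : ∀ i, 1 ≤ e i)
    (hα : Function.Injective α)
    (g : Fin m → Polynomial ℤ_[p]) (t : Fin m → ℕ) (ht : ∀ j, 1 ≤ t j)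
    (hg_irr : ∀ j, Irreducible (g j))
    (hg_noroot : ∀ j (x : ℤ_[p]), (g j).eval x ≠ 0)
    (hg_coprime : ∀ j jQ, j ≠ jQ → ¬ Associated (g j) (g jQ))
    (hfact : f = (∏ i, (X - C (α i)) ^ e i) * ∏ j, g j ^ t j)
    (B : Polynomial ℚ)
    (hB : B = (1 - Polynomial.X) * ∏ i, (Polynomial.C (p : ℚ) - Polynomial.X ^ e i)) :
    B.natDegree ≤ 1 + d ∧
    ∃ A : Polynomial ℚ,
      (PowerSeries.mk fun k : ℕ => (Nk p k f : ℚ) / (p : ℚ) ^ k) * (B : PowerSeries ℚ)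
        = (A : PowerSeries ℚ) := by

  classical
  constructor
  · -- degree bound
    have hfac_ne : ∀ i : Fin n, (Polynomial.C (p : ℚ) - Polynomial.X ^ e i) ≠ 0 := by
      intro i
      have : (Polynomial.C (p : ℚ) - Polynomial.X ^ e i)
          = -(Polynomial.X ^ e i - Polynomial.C (p : ℚ)) := by ring
      rw [this, neg_ne_zero]
      exact X_pow_sub_C_ne_zero (he i) _
    have hfac_deg : ∀ i : Fin n, (Polynomial.C (p : ℚ) - Polynomial.X ^ e i).natDegree = e i := by
      intro i
      have : (Polynomial.C (p : ℚ) - Polynomial.X ^ e i)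
          = -(Polynomial.X ^ e i - Polynomial.C (p : ℚ)) := by ring
      rw [this, natDegree_neg, natDegree_X_pow_sub_C]
    have h1X : (1 - Polynomial.X : Polynomial ℚ) = -(Polynomial.X - Polynomial.C 1) := by
      rw [map_one]; ring
    have h1Xne : (1 - Polynomial.X : Polynomial ℚ) ≠ 0 := by
      rw [h1X, neg_ne_zero]
      exact X_sub_C_ne_zero 1
    have hprod_ne : (∏ i, (Polynomial.C (p : ℚ) - Polynomial.X ^ e i)) ≠ 0 :=
      Finset.prod_ne_zero_iff.2 (fun i _ => hfac_ne i)
    have hBdeg : B.natDegree = 1 + ∑ i, e i := by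
      rw [hB, natDegree_mul h1Xne hprod_ne, natDegree_prod _ _ (fun i _ => hfac_ne i)]
      congr 1
      · rw [h1X, natDegree_neg, natDegree_X_sub_C]
      · exact Finset.sum_congr rfl (fun i _ => hfac_deg i)
    rw [hBdeg]
    have hP1 : (∏ i, (X - C (α i)) ^ e i : Polynomial ℤ_[p]).Monic :=
      monic_prod_of_monic _ _ (fun i _ => (monic_X_sub_C (α i)).pow (e i))
    have hGne0 : (∏ j, g j ^ t j : Polynomial ℤ_[p]) ≠ 0 :=
      Finset.prod_ne_zero_iff.2 (fun j _ => pow_ne_zero _ (hg_irr j).ne_zero)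
    have hfdeg : f.natDegree = (∏ i, (X - C (α i)) ^ e i : Polynomial ℤ_[p]).natDegree
        + (∏ j, g j ^ t j : Polynomial ℤ_[p]).natDegree := by
      rw [hfact, natDegree_mul hP1.ne_zero hGne0]
    have hP1deg : (∏ i, (X - C (α i)) ^ e i : Polynomial ℤ_[p]).natDegree = ∑ i, e i := by
      rw [natDegree_prod _ _ (fun i _ => ((monic_X_sub_C (α i)).pow (e i)).ne_zero)]
      apply Finset.sum_congr rfl
      intro i _
      rw [((monic_X_sub_C (α i)).natDegree_pow), natDegree_X_sub_C, mul_one]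
    have : ∑ i, e i ≤ d := by
      rw [hd, hfdeg, hP1deg]
      omega
    omega
  · -- rationality
    obtain ⟨K, ν, hνK, hcount⟩ := main_count f α e he hα g t hg_noroot hfact
    have hpQ : (p : ℚ) ≠ 0 := by
      have := (Fact.out : p.Prime).pos
      positivity
    set a : Fin n → ℕ → ℚ := fun i k => ((p : ℚ) ^ (sig (ν i) (e i) k))⁻¹ with ha
    have hrec : ∀ i, ∀ k, K ≤ k → (p : ℚ) * a i (k + e i) = a i k := by
      intro i k hk
      have hss : sig (ν i) (e i) (k + e i) = sig (ν i) (e i) k + 1 :=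
        sig_succ (he i) (le_trans (hνK i) hk)
      show (p : ℚ) * ((p : ℚ) ^ (sig (ν i) (e i) (k + e i)))⁻¹ = ((p:ℚ) ^ (sig (ν i) (e i) k))⁻¹
      rw [hss, pow_succ]
      field_simp
    have hAi : ∀ i, ∃ Ai : Polynomial ℚ, PowerSeries.mk (a i) *
        ((Polynomial.C (p : ℚ) - Polynomial.X ^ e i : Polynomial ℚ) : PowerSeries ℚ)
        = (Ai : PowerSeries ℚ) := fun i => shift_poly p (a i) (e i) K (hrec i)
    choose Ai hAiEq using hAi
    obtain ⟨E, hEeq⟩ : ∃ E : Polynomial ℚ,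
        (PowerSeries.mk fun k : ℕ => (Nk p k f : ℚ) / (p : ℚ) ^ k)
          - ∑ i, PowerSeries.mk (a i) = (E : PowerSeries ℚ) := by
      apply ev_zero_poly _ K
      intro k hk
      rw [map_sub, map_sum]
      simp only [PowerSeries.coeff_mk]
      rw [hcount k hk, sub_eq_zero]
      push_cast
      rw [Finset.sum_div]
      apply Finset.sum_congr rfl
      intro i _
      have hσk : sig (ν i) (e i) k ≤ k := sig_le_self (he i) (le_trans (hνK i) hk)
      have hkey : (p : ℚ) ^ (k - sig (ν i) (e i) k) * (p : ℚ) ^ (sig (ν i) (e i) k)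
          = (p : ℚ) ^ k := by
        rw [← pow_add, Nat.sub_add_cancel hσk]
      show (p : ℚ) ^ (k - sig (ν i) (e i) k) / (p : ℚ) ^ k = ((p : ℚ) ^ (sig (ν i) (e i) k))⁻¹
      rw [div_eq_iff (pow_ne_zero _ hpQ), inv_mul_eq_div, eq_div_iff (pow_ne_zero _ hpQ)]
      exact hkey
    set R : Fin n → Polynomial ℚ := fun i =>
      (1 - Polynomial.X) * ∏ j ∈ Finset.univ.erase i, (Polynomial.C (p : ℚ) - Polynomial.X ^ e j)
      with hR
    have hBfac : ∀ i, (B : PowerSeries ℚ)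
        = ((Polynomial.C (p : ℚ) - Polynomial.X ^ e i : Polynomial ℚ) : PowerSeries ℚ)
          * ((R i : Polynomial ℚ) : PowerSeries ℚ) := by
      intro i
      have hpoly : B = (Polynomial.C (p : ℚ) - Polynomial.X ^ e i) * R i := by
        rw [hB, hR, ← Finset.mul_prod_erase Finset.univ _ (Finset.mem_univ i)]
        ring
      rw [hpoly, Polynomial.coe_mul]
    refine ⟨E * B + ∑ i, Ai i * R i, ?_⟩
    have hdecomp : (PowerSeries.mk fun k : ℕ => (Nk p k f : ℚ) / (p : ℚ) ^ k)
        = (E : PowerSeries ℚ) + ∑ i, PowerSeries.mk (a i) := by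
      rw [← hEeq]; ring
    rw [hdecomp, add_mul, Finset.sum_mul, Polynomial.coe_add, Polynomial.coe_mul]
    congr 1
    have hsum : ((∑ i, Ai i * R i : Polynomial ℚ) : PowerSeries ℚ)
        = ∑ i, ((Ai i * R i : Polynomial ℚ) : PowerSeries ℚ) := by
      rw [← Polynomial.coeToPowerSeries.ringHom_apply, map_sum]
      simp only [Polynomial.coeToPowerSeries.ringHom_apply]
    rw [hsum]
    apply Finset.sum_congr rfl
    intro i _
    rw [hBfac i, ← mul_assoc, hAiEq i, ← Polynomial.coe_mul]
end
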